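/- arXiv:2305.03858 — 5 statements merged into one kernel-verified Lean document; each statement's English description precedes it below -/
import Mathlib

section
/- Let b ≥ 0, γ = 1 + 16b/3, and let ω, c ∈ ℝ satisfy 4ω > c². Then for every x ∈ ℝ the quantity √(c² + γ(4ω − c²)) · cosh(√(4ω − c²) · x) − c is strictly positive, the function Φ(x) = ( 2(4ω − c²) / ( √(c² + γ(4ω − c²)) · cosh(√(4ω − c²) · x) − c ) )^{1/2} is smooth on ℝ, and it satisfies the ordinary differential equation −Φ''(x) + (ω − c²/4)Φ(x) + (c/2)Φ(x)³ − (3/16)γΦ(x)⁵ = 0 for all x ∈ ℝ. -/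
open Real

/-- For `b ≥ 0`, `γ = 1 + 16b/3` and `4ω > c²`, the denominator
`√(c² + γ(4ω − c²)) cosh(√(4ω − c²) x) − c` is positive, the profile
`Φ(x) = (2(4ω − c²) / (√(c² + γ(4ω − c²)) cosh(√(4ω − c²) x) − c))^{1/2}`
is smooth, and it solves `−Φ'' + (ω − c²/4)Φ + (c/2)Φ³ − (3/16)γΦ⁵ = 0`. -/
theorem soliton_profile_smooth_and_solves_ODE
    (b : ℝ) (hb : 0 ≤ b) (γ ω c : ℝ) (hγ : γ = 1 + 16 * b / 3)
    (hωc : 4 * ω > c ^ 2) (Φ : ℝ → ℝ)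
    (hΦ : ∀ x : ℝ, Φ x = Real.sqrt (2 * (4 * ω - c ^ 2) /
      (Real.sqrt (c ^ 2 + γ * (4 * ω - c ^ 2))
        * Real.cosh (Real.sqrt (4 * ω - c ^ 2) * x) - c))) :
    (∀ x : ℝ, 0 < Real.sqrt (c ^ 2 + γ * (4 * ω - c ^ 2))
        * Real.cosh (Real.sqrt (4 * ω - c ^ 2) * x) - c)
    ∧ ContDiff ℝ (⊤ : ℕ∞) Φ
    ∧ ∀ x : ℝ, -(deriv (deriv Φ) x) + (ω - c ^ 2 / 4) * Φ x
        + (c / 2) * (Φ x) ^ 3 - (3 / 16) * γ * (Φ x) ^ 5 = 0 := by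
  have hγ1 : (1:ℝ) ≤ γ := by rw [hγ]; linarith
  have hμ : (0:ℝ) < 4 * ω - c ^ 2 := by linarith
  set μ : ℝ := 4 * ω - c ^ 2 with hμdef
  set s : ℝ := Real.sqrt μ with hsdef
  have hs2 : s ^ 2 = μ := Real.sq_sqrt hμ.le
  have hspos : 0 < s := Real.sqrt_pos.mpr hμ
  have hAnn : (0:ℝ) ≤ c ^ 2 + γ * μ := by nlinarith [sq_nonneg c]
  set A : ℝ := Real.sqrt (c ^ 2 + γ * μ) with hAdef
  have hA2 : A ^ 2 = c ^ 2 + γ * μ := Real.sq_sqrt hAnn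
  have hApos : 0 < A := Real.sqrt_pos.mpr (by nlinarith)
  have hcA : c < A := by
    have h1 : Real.sqrt (c ^ 2) < A := by
      apply Real.sqrt_lt_sqrt (sq_nonneg c)
      nlinarith
    calc c ≤ |c| := le_abs_self c
      _ = Real.sqrt (c ^ 2) := (Real.sqrt_sq_eq_abs c).symm
      _ < A := h1
  have hD : ∀ x : ℝ, 0 < A * Real.cosh (s * x) - c := by
    intro x
    nlinarith [Real.one_le_cosh (s * x)]
  set t : ℝ := Real.sqrt (2 * μ) with htdef
  have ht2 : t ^ 2 = 2 * μ := Real.sq_sqrt (by linarith)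
  -- rewrite Φ in rpow form
  set G : ℝ → ℝ := fun y => t * (A * Real.cosh (s * y) - c) ^ (-(1/2) : ℝ) with hGdef
  have hΦG : Φ = G := by
    funext y
    rw [hΦ y, hGdef]
    rw [Real.sqrt_div (by linarith), Real.sqrt_eq_rpow (A * Real.cosh (s * y) - c),
      div_eq_mul_inv, ← Real.rpow_neg (hD y).le]
  refine ⟨hD, ?_, ?_⟩
  · -- smoothness
    rw [hΦG, hGdef]
    have hDsm : ContDiff ℝ (⊤ : ℕ∞) (fun y : ℝ => A * Real.cosh (s * y) - c) := by
      have h0 : ContDiff ℝ (⊤ : ℕ∞) (fun y : ℝ => s * y) := contDiff_const.mul contDiff_id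
      have h1 : ContDiff ℝ (⊤ : ℕ∞) (fun y : ℝ => Real.cosh (s * y)) := Real.contDiff_cosh.comp h0
      exact (contDiff_const.mul h1).sub contDiff_const
    rw [contDiff_iff_contDiffAt]
    intro x
    exact contDiffAt_const.mul
      (by have := (Real.contDiffAt_rpow_const_of_ne (p := (-(1/2) : ℝ)) (hD x).ne').comp x hDsm.contDiffAt; exact this)
  · -- the ODE
    intro x
    have hDD : ∀ y : ℝ, HasDerivAt (fun z => A * Real.cosh (s * z) - c)
        (A * s * Real.sinh (s * y)) y := by
      intro y
      have h := (((hasDerivAt_id y).const_mul s).cosh.const_mul A).sub_const c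
      refine h.congr_deriv ?_
      simp only [id_eq]
      ring
    have hG1 : ∀ y : ℝ, HasDerivAt G
        (t * ((-(1/2) : ℝ) * (A * Real.cosh (s * y) - c) ^ ((-(1/2) : ℝ) - 1)
          * (A * s * Real.sinh (s * y)))) y := by
      intro y
      exact ((Real.hasDerivAt_rpow_const (p := (-(1/2) : ℝ))
        (Or.inl (hD y).ne')).comp y (hDD y)).const_mul t
    have hderivG : deriv G = fun y =>
        t * ((-(1/2) : ℝ) * (A * Real.cosh (s * y) - c) ^ ((-(1/2) : ℝ) - 1)
          * (A * s * Real.sinh (s * y))) := funext fun y => (hG1 y).deriv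
    -- abbreviations at the point x
    set ch := Real.cosh (s * x) with hch
    set sh := Real.sinh (s * x) with hsh
    set Dx := A * ch - c with hDx
    have hDxpos : 0 < Dx := hD x
    set r : ℝ := Dx ^ (-(1/2) : ℝ) with hr
    have hrpos : 0 < r := Real.rpow_pos_of_pos hDxpos _
    have hrr : r * r * Dx = 1 := by
      rw [hr, ← Real.rpow_add hDxpos,
        show (-(1/2:ℝ)) + (-(1/2)) = -1 by norm_num, Real.rpow_neg_one]
      exact inv_mul_cancel₀ hDxpos.ne'
    have hinv : Dx⁻¹ = r * r := (eq_inv_of_mul_eq_one_left hrr).symm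
    have hG2 : HasDerivAt (deriv G)
        (t * -(1/2 : ℝ) * (((-(1/2) : ℝ) - 1) * Dx ^ ((-(1/2) : ℝ) - 1 - 1)
            * (A * s * sh) * (A * s * sh)
          + Dx ^ ((-(1/2) : ℝ) - 1) * (A * s * (ch * s)))) x := by
      rw [hderivG]
      have h1 := (Real.hasDerivAt_rpow_const (p := ((-(1/2) : ℝ) - 1))
        (Or.inl (hD x).ne')).comp x (hDD x)
      have h2 : HasDerivAt (fun y => A * s * Real.sinh (s * y))
          (A * s * (Real.cosh (s * x) * s)) x := by
        have h := (((hasDerivAt_id x).const_mul s).sinh).const_mul (A * s)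
        simpa using h
      have h3 := (h1.mul h2).const_mul (t * -(1/2 : ℝ))
      refine h3.congr_of_eventuallyEq ?_
      filter_upwards with y
      simp only [Function.comp_apply, Pi.mul_apply]
      ring
    have hp1 : Dx ^ ((-(1/2) : ℝ) - 1) = r * Dx⁻¹ := by
      rw [show ((-(1/2) : ℝ) - 1) = (-(1/2) : ℝ) + (-1) by norm_num,
        Real.rpow_add hDxpos, Real.rpow_neg_one, hr]
    have hp2 : Dx ^ ((-(1/2) : ℝ) - 1 - 1) = r * Dx⁻¹ * Dx⁻¹ := by
      rw [show ((-(1/2) : ℝ) - 1 - 1) = (-(1/2) : ℝ) + (-1) + (-1) by norm_num,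
        Real.rpow_add hDxpos, Real.rpow_add hDxpos, Real.rpow_neg_one]
    have hd2 := hG2.deriv
    rw [hp1, hp2, hinv] at hd2
    have hGx : G x = t * r := by rw [hr]
    rw [hΦG, hd2, hGx]
    -- auxiliary relations
    have hsinh : sh ^ 2 = ch ^ 2 - 1 := by rw [hsh, hch]; exact Real.sinh_sq (s * x)
    have hts : t ^ 2 = 2 * s ^ 2 := by rw [ht2, hs2]
    have hω : ω = (s ^ 2 + c ^ 2) / 4 := by
      have h : s ^ 2 = 4 * ω - c ^ 2 := hs2.trans hμdef
      linarith
    have hA2' : A ^ 2 = c ^ 2 + γ * s ^ 2 := by rw [hA2, hs2]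
    have hrr' : r * r * (A * ch - c) = 1 := by rw [← hDx]; exact hrr
    linear_combination
        (-(3/4) * t * r^5 * A^2 * s^2) * hsinh
      + ((c/2) * t * r^3) * hts
      + (-(3/16) * γ * t * r^5 * (t^2 + 2*s^2)) * hts
      + (t * r) * hω
      + ((3/4) * t * s^2 * r^5) * hA2'
      + (t * s^2 * r * (-(3/4) * r^2 * A * ch - 1/4 - (3/4) * c * r^2)) * hrr'
end

section
/- Let b ≥ 0, γ = 1 + 16b/3, and c > 0. Then the function Φ(x) = ( 4c / (c²x² + γ) )^{1/2} is smooth on ℝ and satisfies the ordinary differential equation −Φ''(x) + (c/2)Φ(x)³ − (3/16)γΦ(x)⁵ = 0 for all x ∈ ℝ (this is the equation −Φ'' + (ω − c²/4)Φ + (c/2)Φ³ − (3/16)γΦ⁵ = 0 in the degenerate case ω = c²/4). -/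
open Real

/-- For `b ≥ 0`, `γ = 1 + 16b/3` and `c > 0`, the degenerate profile
`Φ(x) = (4c/(c²x² + γ))^{1/2}` is smooth and solves
`−Φ'' + (c/2)Φ³ − (3/16)γΦ⁵ = 0` (the case `ω = c²/4`). -/
theorem degenerate_soliton_profile_smooth_and_solves_ODE
    (b : ℝ) (hb : 0 ≤ b) (γ c : ℝ) (hγ : γ = 1 + 16 * b / 3) (hc : 0 < c)
    (Φ : ℝ → ℝ)
    (hΦ : ∀ x : ℝ, Φ x = Real.sqrt (4 * c / (c ^ 2 * x ^ 2 + γ))) :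
    ContDiff ℝ (⊤ : ℕ∞) Φ
    ∧ ∀ x : ℝ, -(deriv (deriv Φ) x)
        + (c / 2) * (Φ x) ^ 3 - (3 / 16) * γ * (Φ x) ^ 5 = 0 := by
  have hγ0 : 0 < γ := by nlinarith
  set u : ℝ → ℝ := fun x => c ^ 2 * x ^ 2 + γ with hu_def
  have hu : ∀ x, 0 < u x := fun x => by
    have := sq_nonneg (c * x)
    simp only [hu_def]; nlinarith
  have hg : ∀ x, 0 < 4 * c / u x := fun x => by positivity
  have hΦpos : ∀ x, 0 < Φ x := fun x => by
    rw [hΦ x]; exact Real.sqrt_pos.mpr (hg x)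
  have hΦsq : ∀ x, Φ x ^ 2 = 4 * c / u x := fun x => by
    rw [hΦ x]; exact Real.sq_sqrt (hg x).le
  have hΦfun : Φ = fun x => Real.sqrt (4 * c / u x) := funext hΦ
  have hu' : ∀ x, HasDerivAt u (2 * c ^ 2 * x) x := fun x => by
    have h := ((hasDerivAt_pow 2 x).const_mul (c ^ 2)).add_const γ
    exact h.congr_deriv (by push_cast; ring)
  -- first derivative
  have hΦ' : ∀ x, HasDerivAt Φ (-(c ^ 2 * x) * Φ x / u x) x := fun x => by
    have hgd : HasDerivAt (fun x => 4 * c / u x)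
        ((0 * u x - 4 * c * (2 * c ^ 2 * x)) / u x ^ 2) x :=
      (hasDerivAt_const x (4 * c)).div (hu' x) (hu x).ne'
    have h := hgd.sqrt (hg x).ne'
    rw [hΦfun]
    convert h using 1
    have hsx : Real.sqrt (4 * c / u x) = Φ x := (hΦ x).symm
    beta_reduce
    rw [hsx]
    have h1 : Φ x ≠ 0 := (hΦpos x).ne'
    have h2 : u x ≠ 0 := (hu x).ne'
    have h3 : Φ x ^ 2 * u x = 4 * c := by
      rw [hΦsq x]; field_simp
    rw [div_div, div_eq_div_iff h2 (by positivity)]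
    linear_combination (-2 * c ^ 2 * x * u x) * h3
  set D : ℝ → ℝ := fun x => -(c ^ 2 * x) * Φ x / u x with hD_def
  have hderivΦ : deriv Φ = D := funext fun x => (hΦ' x).deriv
  have hD' : ∀ x, HasDerivAt D
      (((-(c ^ 2) * Φ x + -(c ^ 2 * x) * (-(c ^ 2 * x) * Φ x / u x)) * u x
        - (-(c ^ 2 * x) * Φ x) * (2 * c ^ 2 * x)) / u x ^ 2) x := fun x => by
    have hnum : HasDerivAt (fun x => -(c ^ 2 * x) * Φ x)
        (-(c ^ 2) * Φ x + -(c ^ 2 * x) * (-(c ^ 2 * x) * Φ x / u x)) x := by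
      have h1 : HasDerivAt (fun x : ℝ => -(c ^ 2 * x)) (-(c ^ 2)) x := by
        have h := ((hasDerivAt_id x).const_mul (c ^ 2)).neg
        simp only [mul_one] at h
        exact h
      exact h1.mul (hΦ' x)
    exact hnum.div (hu' x) (hu x).ne'
  constructor
  · rw [hΦfun]
    have hcd : ContDiff ℝ (⊤ : ℕ∞) u := by
      simp only [hu_def]; exact (contDiff_const.mul (contDiff_id.pow 2)).add contDiff_const
    rw [contDiff_iff_contDiffAt]
    intro x
    exact (Real.contDiffAt_sqrt (hg x).ne').comp x
      ((contDiff_const.div hcd fun y => (hu y).ne').contDiffAt)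
  · intro x
    rw [hderivΦ, (hD' x).deriv]
    have h2 : u x ≠ 0 := (hu x).ne'
    have hΦ3 : Φ x ^ 3 = 4 * c * Φ x / u x := by
      have h : Φ x ^ 3 = Φ x ^ 2 * Φ x := by ring
      rw [h, hΦsq x]; ring
    have hΦ5 : Φ x ^ 5 = 16 * c ^ 2 * Φ x / u x ^ 2 := by
      have h : Φ x ^ 5 = (Φ x ^ 2) ^ 2 * Φ x := by ring
      rw [h, hΦsq x, div_pow]; ring
    rw [hΦ3, hΦ5]
    have h4 : u x = c ^ 2 * x ^ 2 + γ := rfl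
    rw [h4] at h2 ⊢
    field_simp
    ring
end

section
/- Let b ≥ 0, γ = 1 + 16b/3, and ω, c ∈ ℝ. Let Φ : ℝ → ℝ be twice continuously differentiable, with Φ² integrable on (−∞, a] for every a ∈ ℝ, and suppose Φ satisfies −Φ'' + (ω − c²/4)Φ + (c/2)Φ³ − (3/16)γΦ⁵ = 0 on ℝ. Define φ : ℝ → ℂ by φ(x) = Φ(x) · exp( i( (c/2)x − (1/4)∫_{−∞}^{x} Φ(y)² dy ) ). Then φ is twice continuously differentiable and satisfies −φ''(x) + ω φ(x) + i c φ'(x) − i |φ(x)|² φ'(x) − b |φ(x)|⁴ φ(x) = 0 for all x ∈ ℝ. -/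
open Real MeasureTheory

/-- Gauge transformation of a real profile solving
`−Φ'' + (ω − c²/4)Φ + (c/2)Φ³ − (3/16)γΦ⁵ = 0` yields a `C²` solution `φ` of
`−φ'' + ωφ + icφ' − i|φ|²φ' − b|φ|⁴φ = 0`. -/
theorem gauge_transform_profile_solves_soliton_equation
    (b : ℝ) (hb : 0 ≤ b) (γ ω c : ℝ) (hγ : γ = 1 + 16 * b / 3)
    (Φ : ℝ → ℝ) (hΦC2 : ContDiff ℝ 2 Φ)
    (hInt : ∀ a : ℝ, IntegrableOn (fun y => (Φ y) ^ 2) (Set.Iic a))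
    (hODE : ∀ x : ℝ, -(deriv (deriv Φ) x) + (ω - c ^ 2 / 4) * Φ x
      + (c / 2) * (Φ x) ^ 3 - (3 / 16) * γ * (Φ x) ^ 5 = 0)
    (φ : ℝ → ℂ)
    (hφ : ∀ x : ℝ, φ x = (Φ x : ℂ) * Complex.exp (Complex.I *
      (((c / 2) * x - (1 / 4) * ∫ y in Set.Iic x, (Φ y) ^ 2 : ℝ) : ℂ))) :
    ContDiff ℝ 2 φ
    ∧ ∀ x : ℝ, -(deriv (deriv φ) x) + (ω : ℂ) * φ x + Complex.I * c * deriv φ x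
        - Complex.I * (‖φ x‖ : ℂ) ^ 2 * deriv φ x
        - (b : ℂ) * (‖φ x‖ : ℂ) ^ 4 * φ x = 0 := by
  subst hγ
  have h21 : (2 : WithTop ℕ∞) = 1 + 1 := by norm_num
  -- basic regularity facts
  have hΦd : Differentiable ℝ Φ := hΦC2.differentiable (by norm_num)
  have hΦ'C1 : ContDiff ℝ 1 (deriv Φ) := by
    rw [h21, contDiff_succ_iff_deriv] at hΦC2; exact hΦC2.2.2
  have hΦ'd : Differentiable ℝ (deriv Φ) := hΦ'C1.differentiable (by norm_num)
  have hfc : Continuous (fun y : ℝ => Φ y ^ 2) := (hΦC2.continuous).pow 2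
  -- the phase function and its derivative
  set θ : ℝ → ℝ := fun x => (c / 2) * x - (1 / 4) * ∫ y in Set.Iic x, (Φ y) ^ 2 with hθdef
  set g : ℝ → ℝ := fun x => c / 2 - Φ x ^ 2 / 4 with hgdef
  have hθ : ∀ x : ℝ, HasDerivAt θ (g x) x := by
    intro x
    have hFTC : HasDerivAt (fun u : ℝ => ∫ t in (0:ℝ)..u, Φ t ^ 2) (Φ x ^ 2) x :=
      intervalIntegral.integral_hasDerivAt_right ((hfc.intervalIntegrable 0 x))
        (hfc.stronglyMeasurableAtFilter _ _) hfc.continuousAt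
    have key : ∀ u : ℝ, (∫ y in Set.Iic u, Φ y ^ 2)
        = (∫ y in Set.Iic (0:ℝ), Φ y ^ 2) + ∫ t in (0:ℝ)..u, Φ t ^ 2 := by
      intro u
      have := intervalIntegral.integral_Iic_sub_Iic (hInt 0) (hInt u)
      linarith
    have h1 : HasDerivAt (fun u : ℝ => (c / 2) * u -
        (1 / 4) * ((∫ y in Set.Iic (0:ℝ), Φ y ^ 2) + ∫ t in (0:ℝ)..u, Φ t ^ 2))
        ((c / 2) * 1 - (1 / 4) * (Φ x ^ 2)) x := by
      exact ((hasDerivAt_id x).const_mul (c / 2)).sub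
        (((hasDerivAt_const x _).add hFTC).const_mul (1 / 4) |>.congr_deriv (by ring))
    have h2 : HasDerivAt θ ((c / 2) * 1 - (1 / 4) * (Φ x ^ 2)) x :=
      h1.congr_of_eventuallyEq (Filter.Eventually.of_forall fun u => by
        simp only [hθdef]; rw [key u])
    exact h2.congr_deriv (by simp [hgdef]; ring)
  have hθdiff : Differentiable ℝ θ := fun x => (hθ x).differentiableAt
  have hderivθ : deriv θ = g := funext fun x => (hθ x).deriv
  have hgC1 : ContDiff ℝ 1 g :=
    contDiff_const.sub (((hΦC2.of_le (by norm_num)).pow 2).div_const 4)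
  have hθC2 : ContDiff ℝ 2 θ := by
    rw [h21, contDiff_succ_iff_deriv]
    exact ⟨hθdiff, by simp, hderivθ ▸ hgC1⟩
  -- φ as a product
  have hφfun : φ = fun x => (Φ x : ℂ) * Complex.exp (Complex.I * (θ x : ℂ)) := funext hφ
  have hφC2 : ContDiff ℝ 2 φ := by
    rw [hφfun]
    exact (Complex.ofRealCLM.contDiff.comp hΦC2).mul
      (Complex.contDiff_exp.comp (contDiff_const.mul (Complex.ofRealCLM.contDiff.comp hθC2)))
  refine ⟨hφC2, fun x => ?_⟩
  -- first derivative of φ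
  set E : ℝ → ℂ := fun x => Complex.exp (Complex.I * (θ x : ℂ)) with hEdef
  have hE : ∀ x : ℝ, HasDerivAt E (Complex.I * (g x : ℂ) * E x) x := by
    intro x
    have h1 : HasDerivAt (fun u : ℝ => Complex.I * (θ u : ℂ)) (Complex.I * (g x : ℂ)) x :=
      ((hθ x).ofReal_comp).const_mul Complex.I
    exact h1.cexp.congr_deriv (by ring)
  have hA : ∀ x : ℝ, HasDerivAt φ
      ((((deriv Φ x : ℝ) : ℂ) + Complex.I * (g x : ℂ) * (Φ x : ℂ)) * E x) x := by
    intro x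
    have h1 : HasDerivAt (fun u : ℝ => (Φ u : ℂ)) (((deriv Φ x : ℝ) : ℂ)) x :=
      ((hΦd x).hasDerivAt).ofReal_comp
    have := h1.mul (hE x)
    rw [hφfun]
    exact this.congr_deriv (by ring)
  have hderivφ : deriv φ = fun x =>
      (((deriv Φ x : ℝ) : ℂ) + Complex.I * (g x : ℂ) * (Φ x : ℂ)) * E x :=
    funext fun x => (hA x).deriv
  -- derivative of g
  have hg' : ∀ x : ℝ, HasDerivAt g (-(Φ x * deriv Φ x) / 2) x := by
    intro x
    have := ((hΦd x).hasDerivAt.pow 2).div_const 4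
    exact ((hasDerivAt_const x (c / 2)).sub this).congr_deriv (by ring)
  -- second derivative of φ
  have hB : ∀ x : ℝ, HasDerivAt (deriv φ)
      (((((deriv (deriv Φ) x : ℝ) : ℂ) + Complex.I * ((-(Φ x * deriv Φ x) / 2 : ℝ) : ℂ) * (Φ x : ℂ)
          + Complex.I * (g x : ℂ) * ((deriv Φ x : ℝ) : ℂ))
        + (((deriv Φ x : ℝ) : ℂ) + Complex.I * (g x : ℂ) * (Φ x : ℂ)) * (Complex.I * (g x : ℂ)))
        * E x) x := by
    intro x
    have h1 : HasDerivAt (fun u : ℝ => ((deriv Φ u : ℝ) : ℂ)) (((deriv (deriv Φ) x : ℝ) : ℂ)) x :=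
      ((hΦ'd x).hasDerivAt).ofReal_comp
    have h2 : HasDerivAt (fun u : ℝ => ((g u : ℝ) : ℂ)) (((-(Φ x * deriv Φ x) / 2 : ℝ) : ℂ)) x :=
      (hg' x).ofReal_comp
    have h3 : HasDerivAt (fun u : ℝ => ((Φ u : ℝ) : ℂ)) (((deriv Φ x : ℝ) : ℂ)) x :=
      ((hΦd x).hasDerivAt).ofReal_comp
    have hAfun : HasDerivAt (fun u : ℝ => ((deriv Φ u : ℝ) : ℂ) + Complex.I * (g u : ℂ) * (Φ u : ℂ))
        (((deriv (deriv Φ) x : ℝ) : ℂ) + Complex.I * ((-(Φ x * deriv Φ x) / 2 : ℝ) : ℂ) * (Φ x : ℂ)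
          + Complex.I * (g x : ℂ) * ((deriv Φ x : ℝ) : ℂ)) x := by
      have := h1.add (((h2.const_mul Complex.I).mul h3))
      exact this.congr_deriv (by ring)
    have := hAfun.mul (hE x)
    rw [hderivφ]
    exact this.congr_deriv (by ring)
  have hderiv2 : deriv (deriv φ) x =
      ((((deriv (deriv Φ) x : ℝ) : ℂ) + Complex.I * ((-(Φ x * deriv Φ x) / 2 : ℝ) : ℂ) * (Φ x : ℂ)
          + Complex.I * (g x : ℂ) * ((deriv Φ x : ℝ) : ℂ))
        + (((deriv Φ x : ℝ) : ℂ) + Complex.I * (g x : ℂ) * (Φ x : ℂ)) * (Complex.I * (g x : ℂ)))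
        * E x := (hB x).deriv
  -- norm of φ
  have hE1 : ‖E x‖ = 1 := by
    rw [hEdef]
    simp only [Complex.norm_exp]
    simp [Complex.mul_re]
  have hnx : ‖φ x‖ = |Φ x| := by
    rw [hφ x,
      show Complex.exp (Complex.I * (((c / 2) * x
        - (1 / 4) * ∫ y in Set.Iic x, (Φ y) ^ 2 : ℝ) : ℂ)) = E x from rfl,
      norm_mul, hE1, mul_one, Complex.norm_real, Real.norm_eq_abs]
  have hnorm : (‖φ x‖ : ℂ) ^ 2 = ((Φ x : ℂ)) ^ 2 := by
    rw [hnx]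
    norm_cast
    rw [sq_abs]
  have hnorm4 : (‖φ x‖ : ℂ) ^ 4 = ((Φ x : ℂ)) ^ 4 := by
    rw [show (4:ℕ) = 2 * 2 from rfl, pow_mul, pow_mul, hnorm]
  -- the ODE, cast to ℂ
  have hODEc : (-((deriv (deriv Φ) x : ℝ) : ℂ)) + ((ω : ℂ) - (c : ℂ) ^ 2 / 4) * (Φ x : ℂ)
      + ((c : ℂ) / 2) * (Φ x : ℂ) ^ 3
      - (3 / 16) * (1 + 16 * (b : ℂ) / 3) * (Φ x : ℂ) ^ 5 = 0 := by
    have h0 : (((-(deriv (deriv Φ) x) + (ω - c ^ 2 / 4) * Φ x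
        + (c / 2) * (Φ x) ^ 3 - (3 / 16) * (1 + 16 * b / 3) * (Φ x) ^ 5 : ℝ)) : ℂ) = 0 := by
      exact_mod_cast congrArg (fun t : ℝ => (t : ℂ)) (hODE x)
    push_cast at h0
    linear_combination h0
  have hgx : ((g x : ℝ) : ℂ) = (c : ℂ) / 2 - (Φ x : ℂ) ^ 2 / 4 := by
    simp [hgdef]
  rw [hderiv2, hnorm, hnorm4, hderivφ]
  beta_reduce
  rw [hφ x]
  rw [show Complex.exp (Complex.I * (((c / 2) * x
      - (1 / 4) * ∫ y in Set.Iic x, (Φ y) ^ 2 : ℝ) : ℂ)) = E x from rfl]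
  rw [hgx]
  push_cast
  linear_combination (E x) * hODEc +
    ((-((c:ℂ)/2 - (Φ x:ℂ)^2/4)^2 * (Φ x:ℂ) + (c:ℂ) * ((c:ℂ)/2 - (Φ x:ℂ)^2/4) * (Φ x:ℂ)
      - ((c:ℂ)/2 - (Φ x:ℂ)^2/4) * (Φ x:ℂ)^3) * E x) * Complex.I_sq
end

section
/- Let b ≥ 0 and let ω > 0 and c ∈ ℝ satisfy −2√ω < c ≤ 2√ω. Then the soliton φ_{ω,c} belongs to H¹(ℝ; ℂ) and satisfies E(φ_{ω,c}) = −(c/4) P(φ_{ω,c}). -/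
open MeasureTheory Real Complex Filter Topology

noncomputable section

/-- Mass `M(u) = ∫ |u|²`. -/
def Mass (u : ℝ → ℂ) : ℝ := ∫ x : ℝ, ‖u x‖ ^ 2

/-- Momentum `P(u) = -Im ∫ conj(u) u'`. -/
def Mom (u : ℝ → ℂ) : ℝ := -∫ x : ℝ, ((starRingEnd ℂ) (u x) * deriv u x).im

/-- `N₁(u) = -Im ∫ |u|² conj(u) u'`. -/
def N1 (u : ℝ → ℂ) : ℝ :=
  -∫ x : ℝ, ((‖u x‖ : ℂ) ^ 2 * (starRingEnd ℂ) (u x) * deriv u x).im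

/-- Energy. -/
def En (b : ℝ) (u : ℝ → ℂ) : ℝ :=
  (1 / 2) * (∫ x : ℝ, ‖deriv u x‖ ^ 2) - (1 / 4) * N1 u - (b / 6) * ∫ x : ℝ, ‖u x‖ ^ 6

/-- Action `S_{ω,c}`. -/
def Act (b ω c : ℝ) (u : ℝ → ℂ) : ℝ := En b u + (ω / 2) * Mass u + (c / 2) * Mom u

/-- `K_{ω,c}`. -/
def Kf (b ω c : ℝ) (u : ℝ → ℂ) : ℝ :=
  -(∫ x : ℝ, ‖deriv u x‖ ^ 2) - (b / 3) * (∫ x : ℝ, ‖u x‖ ^ 6)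
    + 4 * En b u + ω * Mass u + c * Mom u

/-- `u ∈ H¹(ℝ;ℂ)`: `u` and `u'` in `L²`. -/
def InH1 (u : ℝ → ℂ) : Prop := MemLp u 2 volume ∧ MemLp (deriv u) 2 volume

/-- The soliton profile `Φ_{ω,c}` (with `γ = 1 + 16b/3`). -/
def PhiProf (b ω c : ℝ) (x : ℝ) : ℝ :=
  if 4 * ω > c ^ 2 then
    Real.sqrt (2 * (4 * ω - c ^ 2) /
      (Real.sqrt (c ^ 2 + (1 + 16 * b / 3) * (4 * ω - c ^ 2))
          * Real.cosh (Real.sqrt (4 * ω - c ^ 2) * x) - c))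
  else
    Real.sqrt (4 * c / (c ^ 2 * x ^ 2 + (1 + 16 * b / 3)))

/-- The soliton `φ_{ω,c}`. -/
def phiSol (b ω c : ℝ) (x : ℝ) : ℂ :=
  (PhiProf b ω c x : ℂ) *
    Complex.exp (Complex.I *
      (((c / 2) * x - (1 / 4) * ∫ y in Set.Iic x, (PhiProf b ω c y) ^ 2 : ℝ) : ℂ))

/-- Rescaling `u_λ(x) = λ^{1/2} u(λ x)`. -/
def resc (l : ℝ) (u : ℝ → ℂ) (x : ℝ) : ℂ := (Real.sqrt l : ℂ) * u (l * x)

/-- The `H¹` norm. -/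
def H1norm (f : ℝ → ℂ) : ℝ :=
  Real.sqrt ((∫ x : ℝ, ‖f x‖ ^ 2) + ∫ x : ℝ, ‖deriv f x‖ ^ 2)

end
section AuxSol

open MeasureTheory Real Complex Filter Topology Set

/-- Abstract form of the soliton built from a profile-squared function `F`. -/
noncomputable def uA (c : ℝ) (F : ℝ → ℝ) (x : ℝ) : ℂ :=
  ((Real.sqrt (F x) : ℝ) : ℂ) *
    Complex.exp (Complex.I *
      (((c / 2) * x - (1 / 4) * ∫ y in Set.Iic x, (Real.sqrt (F y)) ^ 2 : ℝ) : ℂ))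

lemma core1 (a c γ d s X Y D : ℝ) (hDX : d * X = D + c)
    (hY : Y ^ 2 = X ^ 2 - 1) (hd : d ^ 2 = c ^ 2 + γ * a) (hs : s ^ 2 = a) :
    -2*a*d*s^2*X*D + 4*a*d^2*s^2*Y^2 = 2*a^2*D^2 + 6*c*a^2*D - 4*γ*a^3 := by
  linear_combination (-2*a*d*X*D + 4*a*d^2*Y^2) * hs + (4*a^2*d^2) * hY
    + (-2*a^2*D + 4*a^2*(d*X + D + c)) * hDX + (-4*a^2) * hd

lemma core2 (a c γ d s X Y D : ℝ) (hDX : d * X = D + c)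
    (hY : Y ^ 2 = X ^ 2 - 1) (hd : d ^ 2 = c ^ 2 + γ * a) (hs : s ^ 2 = a) :
    4*a^2*d^2*s^2*Y^2 = 4*a^3*D^2 + 8*c*a^3*D - 4*γ*a^4 := by
  linear_combination (4*a^2*d^2*Y^2) * hs + (4*a^3*d^2) * hY
    + (4*a^3*(d*X + D + c)) * hDX + (-4*a^3) * hd

lemma sinh_ge_self {u : ℝ} (hu : 0 ≤ u) : u ≤ Real.sinh u := by
  rcases eq_or_lt_of_le hu with h | h
  · simp [← h]
  · exact (Real.self_lt_sinh_iff.2 h).le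

lemma cosh_quad (t : ℝ) : 1 + t ^ 2 / 2 ≤ Real.cosh t := by
  have h1 : Real.cosh t = 1 + 2 * Real.sinh (t / 2) ^ 2 := by
    have h2 := Real.cosh_two_mul (t / 2)
    have h3 := Real.cosh_sq (t / 2)
    have h4 : 2 * (t / 2) = t := by ring
    rw [h4] at h2
    nlinarith
  have h2 : (t / 2) ^ 2 ≤ Real.sinh (t / 2) ^ 2 := by
    rcases le_or_gt 0 t with h | h
    · nlinarith [sinh_ge_self (u := t / 2) (by linarith)]
    · have h3 := sinh_ge_self (u := -(t / 2)) (by linarith)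
      rw [Real.sinh_neg] at h3
      nlinarith
  nlinarith

set_option maxHeartbeats 1000000 in
lemma key (b a c γ : ℝ) (hb : 0 ≤ b) (hγ : γ = 1 + 16 * b / 3)
    (ha : 0 ≤ a) (F F' : ℝ → ℝ)
    (hFpos : ∀ x, 0 < F x)
    (hFd : ∀ x, HasDerivAt F (F' x) x)
    (hF'd : ∀ x, HasDerivAt F' (a * F x + 3 * c / 2 * F x ^ 2 + -(γ / 2) * F x ^ 3) x)
    (hA : ∀ x, F' x ^ 2 = a * F x ^ 2 + c * F x ^ 3 - γ / 4 * F x ^ 4)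
    (hFint : Integrable F)
    (C : ℝ) (hC : 0 < C) (hFle : ∀ x, F x ≤ C)
    (h0t : Tendsto F atTop (𝓝 0)) (h0b : Tendsto F atBot (𝓝 0)) :
    InH1 (uA c F) ∧ En b (uA c F) = -(c / 4) * Mom (uA c F) := by
  have hγ1 : (1:ℝ) ≤ γ := by rw [hγ]; linarith
  have hγ0 : (0:ℝ) < γ := by linarith
  have hF0 : ∀ x, F x ≠ 0 := fun x => (hFpos x).ne'
  have hFc : Continuous F := by
    rw [continuous_iff_continuousAt]; exact fun x => (hFd x).continuousAt
  have hF'c : Continuous F' := by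
    rw [continuous_iff_continuousAt]; exact fun x => (hF'd x).continuousAt
  have hint2 : Integrable (fun x => F x ^ 2) := by
    refine (hFint.const_mul C).mono' ((hFc.pow 2).aestronglyMeasurable) ?_
    filter_upwards with x
    have h1 := hFpos x; have h2 := hFle x
    rw [Real.norm_eq_abs, _root_.abs_of_nonneg (pow_nonneg h1.le 2)]
    nlinarith
  have hint3 : Integrable (fun x => F x ^ 3) := by
    refine (hint2.const_mul C).mono' ((hFc.pow 3).aestronglyMeasurable) ?_
    filter_upwards with x
    have h1 := hFpos x; have h2 := hFle x
    rw [Real.norm_eq_abs, _root_.abs_of_nonneg (pow_nonneg h1.le 3)]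
    nlinarith [sq_nonneg (F x)]
  have comboInt : ∀ α β δ : ℝ, Integrable (fun x => α * F x + β * F x ^ 2 + δ * F x ^ 3) :=
    fun α β δ => ((hFint.const_mul α).add (hint2.const_mul β)).add (hint3.const_mul δ)
  have comboVal : ∀ α β δ : ℝ, (∫ x : ℝ, (α * F x + β * F x ^ 2 + δ * F x ^ 3))
      = α * (∫ x : ℝ, F x) + β * (∫ x : ℝ, F x ^ 2) + δ * (∫ x : ℝ, F x ^ 3) := by
    intro α β δ
    have i1 : Integrable (fun x : ℝ => α * F x) := hFint.const_mul α
    have i2 : Integrable (fun x : ℝ => β * F x ^ 2) := hint2.const_mul β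
    have i3 : Integrable (fun x : ℝ => δ * F x ^ 3) := hint3.const_mul δ
    have i12 : Integrable (fun x : ℝ => α * F x + β * F x ^ 2) := i1.add i2
    rw [integral_add i12 i3, integral_add i1 i2,
        integral_const_mul, integral_const_mul, integral_const_mul]
  set I2 := ∫ x : ℝ, F x with hI2
  set I4 := ∫ x : ℝ, F x ^ 2 with hI4
  set I6 := ∫ x : ℝ, F x ^ 3 with hI6
  set θ : ℝ → ℝ := fun x => c / 2 * x - 1 / 4 * ∫ y in Iic x, F y with hθdef
  have hθd : ∀ x, HasDerivAt θ (c / 2 - F x / 4) x := by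
    intro x
    have h0 : (fun t => ∫ y in Iic t, F y)
        = fun t => (∫ y in Iic (0:ℝ), F y) + ∫ y in (0:ℝ)..t, F y := by
      funext t
      rw [← intervalIntegral.integral_Iic_sub_Iic hFint.integrableOn hFint.integrableOn]
      ring
    have h1 : HasDerivAt (fun t => ∫ y in Iic t, F y) (F x) x := by
      rw [h0]
      exact (intervalIntegral.integral_hasDerivAt_right (hFint.intervalIntegrable)
        (hFc.stronglyMeasurableAtFilter _ _) hFc.continuousAt).const_add _
    have h2 := ((hasDerivAt_id x).const_mul (c / 2)).sub (h1.const_mul (1 / 4))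
    refine h2.congr_deriv ?_
    ring
  have hθc : Continuous θ := by
    rw [continuous_iff_continuousAt]; exact fun x => (hθd x).continuousAt
  set Φ : ℝ → ℝ := fun x => Real.sqrt (F x) with hΦdef
  have hΦsq : ∀ x, Φ x ^ 2 = F x := fun x => Real.sq_sqrt (hFpos x).le
  have hΦpos : ∀ x, 0 < Φ x := fun x => Real.sqrt_pos.2 (hFpos x)
  set Φ' : ℝ → ℝ := fun x => F' x / (2 * Real.sqrt (F x)) with hΦ'def
  have hΦd : ∀ x, HasDerivAt Φ (Φ' x) x := fun x => (hFd x).sqrt (hF0 x)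
  have hΦc : Continuous Φ := Real.continuous_sqrt.comp hFc
  have hΦ'c : Continuous Φ' := by
    apply hF'c.div (continuous_const.mul (Real.continuous_sqrt.comp hFc))
    intro x
    have h1 : 0 < Real.sqrt (F x) := Real.sqrt_pos.2 (hFpos x)
    exact (mul_pos two_pos h1).ne'
  set q : ℝ → ℝ := fun x => c / 2 - F x / 4 with hqdef
  have hqc : Continuous q := continuous_const.sub (hFc.div_const 4)
  have huA : uA c F = fun x => (Φ x : ℂ) * Complex.exp (Complex.I * (θ x : ℂ)) := by
    have hsq : ∀ y : ℝ, Real.sqrt (F y) ^ 2 = F y := fun y => Real.sq_sqrt (hFpos y).le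
    funext x
    simp only [uA, hsq]
    rfl
  set W : ℝ → ℂ := fun x => ((Φ' x : ℂ) + Complex.I * (Φ x : ℂ) * (q x : ℂ)) *
      Complex.exp (Complex.I * (θ x : ℂ)) with hWdef
  have hud : ∀ x, HasDerivAt (uA c F) (W x) x := by
    intro x
    rw [huA]
    have h1 : HasDerivAt (fun y => ((θ y : ℝ) : ℂ)) ((q x : ℝ) : ℂ) x := (hθd x).ofReal_comp
    have h2 : HasDerivAt (fun y => Complex.exp (Complex.I * (θ y : ℂ)))
        (Complex.exp (Complex.I * (θ x : ℂ)) * (Complex.I * (q x : ℂ))) x :=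
      (h1.const_mul Complex.I).cexp
    have h3 : HasDerivAt (fun y => ((Φ y : ℝ) : ℂ)) ((Φ' x : ℝ) : ℂ) x := (hΦd x).ofReal_comp
    have h4 := h3.mul h2
    refine h4.congr_deriv ?_
    simp only [hWdef]
    ring
  have hderiv : deriv (uA c F) = W := funext fun x => (hud x).deriv
  have huc : Continuous (uA c F) := by
    rw [huA]
    exact (Complex.continuous_ofReal.comp hΦc).mul
      (Complex.continuous_exp.comp (continuous_const.mul (Complex.continuous_ofReal.comp hθc)))
  have hWc : Continuous W := by
    apply Continuous.mul
    · exact (Complex.continuous_ofReal.comp hΦ'c).add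
        ((continuous_const.mul (Complex.continuous_ofReal.comp hΦc)).mul
          (Complex.continuous_ofReal.comp hqc))
    · exact Complex.continuous_exp.comp (continuous_const.mul (Complex.continuous_ofReal.comp hθc))
  have hexp1 : ∀ t : ℝ, ‖Complex.exp (Complex.I * (t : ℂ))‖ = 1 := by
    intro t
    rw [Complex.norm_exp]
    simp
  have hnu : ∀ x, ‖uA c F x‖ ^ 2 = F x := by
    intro x
    rw [huA]
    rw [norm_mul, hexp1, mul_one, Complex.norm_real, Real.norm_eq_abs,
      _root_.abs_of_nonneg (hΦpos x).le, hΦsq]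
  have hnu6 : ∀ x, ‖uA c F x‖ ^ 6 = F x ^ 3 := by
    intro x
    rw [show (6:ℕ) = 2 * 3 by norm_num, pow_mul, hnu x]
  have hnW : ∀ x, ‖W x‖ ^ 2
      = (a + c ^ 2) / 4 * F x + 0 * F x ^ 2 + (1 - γ) / 16 * F x ^ 3 := by
    intro x
    have h1 : ‖W x‖ ^ 2 = Φ' x ^ 2 + (Φ x * q x) ^ 2 := by
      simp only [hWdef]
      rw [norm_mul, hexp1, mul_one, Complex.sq_norm, Complex.normSq_apply]
      simp [Complex.add_re, Complex.add_im, Complex.mul_re, Complex.mul_im]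
      ring
    have h3 : (2 * Real.sqrt (F x)) ^ 2 = 4 * F x := by
      rw [mul_pow, Real.sq_sqrt (hFpos x).le]; ring
    have h2 : Φ' x ^ 2 = a / 4 * F x + c / 4 * F x ^ 2 - γ / 16 * F x ^ 3 := by
      have h4 : Φ' x ^ 2 = F' x ^ 2 / (4 * F x) := by
        simp only [hΦ'def, div_pow, h3]
      rw [h4, hA x]
      field_simp [hF0 x]
      ring
    rw [h1, h2]
    simp only [hqdef, mul_pow]
    rw [hΦsq x]
    ring
  have hconj : ∀ x, (starRingEnd ℂ) (uA c F x) * deriv (uA c F) x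
      = ((Φ x : ℂ)) * ((Φ' x : ℂ) + Complex.I * (Φ x : ℂ) * (q x : ℂ)) := by
    intro x
    rw [hderiv, huA]
    have he : (starRingEnd ℂ) (Complex.exp (Complex.I * (θ x : ℂ)))
        * Complex.exp (Complex.I * (θ x : ℂ)) = 1 := by
      rw [← Complex.exp_conj, ← Complex.exp_add]
      have h0 : (starRingEnd ℂ) (Complex.I * (θ x : ℂ)) + Complex.I * (θ x : ℂ) = 0 := by
        simp [map_mul, Complex.conj_I, Complex.conj_ofReal]
      rw [h0, Complex.exp_zero]
    simp only [hWdef, map_mul, Complex.conj_ofReal]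
    linear_combination ((Φ x : ℂ)) * ((Φ' x : ℂ) + Complex.I * (Φ x : ℂ) * (q x : ℂ)) * he
  have him1 : ∀ x, ((starRingEnd ℂ) (uA c F x) * deriv (uA c F) x).im
      = c / 2 * F x + (-(1/4)) * F x ^ 2 + 0 * F x ^ 3 := by
    intro x
    rw [hconj x]
    simp [Complex.mul_im, Complex.mul_re, Complex.add_im, Complex.add_re]
    simp only [hqdef]
    linear_combination (c / 2 - F x / 4) * hΦsq x
  have him2 : ∀ x, ((‖uA c F x‖ : ℂ) ^ 2 * (starRingEnd ℂ) (uA c F x) * deriv (uA c F) x).im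
      = 0 * F x + c / 2 * F x ^ 2 + (-(1/4)) * F x ^ 3 := by
    intro x
    have h1 : ((‖uA c F x‖ : ℂ)) ^ 2 = ((F x : ℝ) : ℂ) := by
      rw [← Complex.ofReal_pow, hnu x]
    rw [mul_assoc, h1]
    have h2 : ∀ (r : ℝ) (z : ℂ), ((r : ℂ) * z).im = r * z.im := by
      intro r z; simp [Complex.mul_im]
    rw [h2, him1 x]
    ring
  have hF'bd : ∀ x, |F' x| ≤ Real.sqrt (a + |c| * C) * F x := by
    intro x
    have h2 := hFpos x
    have h3 := hFle x
    have h1 : F' x ^ 2 ≤ (a + |c| * C) * F x ^ 2 := by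
      rw [hA x]
      have h5 : c * F x ^ 3 ≤ |c| * F x ^ 3 :=
        mul_le_mul_of_nonneg_right (le_abs_self c) (by positivity)
      have h6 : |c| * F x ^ 3 ≤ |c| * C * F x ^ 2 := by
        have h7 : F x ^ 3 ≤ C * F x ^ 2 := by nlinarith
        calc |c| * F x ^ 3 ≤ |c| * (C * F x ^ 2) :=
              mul_le_mul_of_nonneg_left h7 (abs_nonneg c)
          _ = |c| * C * F x ^ 2 := by ring
      nlinarith [pow_pos h2 4, hγ0]
    have h7 : (0:ℝ) ≤ a + |c| * C := by positivity
    rw [← Real.sqrt_sq_eq_abs]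
    calc Real.sqrt (F' x ^ 2) ≤ Real.sqrt ((a + |c| * C) * F x ^ 2) := Real.sqrt_le_sqrt h1
      _ = Real.sqrt (a + |c| * C) * F x := by
          rw [Real.sqrt_mul h7, Real.sqrt_sq (hFpos x).le]
  have hF'0 : ∀ l : Filter ℝ, Tendsto F l (𝓝 0) → Tendsto F' l (𝓝 0) := by
    intro l hl
    have hKt : Tendsto (fun x => Real.sqrt (a + |c| * C) * F x) l (𝓝 0) := by
      simpa using hl.const_mul (Real.sqrt (a + |c| * C))
    have hKt' : Tendsto (fun x => -(Real.sqrt (a + |c| * C) * F x)) l (𝓝 0) := by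
      simpa using hKt.neg
    refine tendsto_of_tendsto_of_tendsto_of_le_of_le hKt' hKt ?_ ?_
    · intro x
      have h9 := (abs_le.1 (hF'bd x)).1
      simp only []
      linarith
    · intro x
      have h9 := (abs_le.1 (hF'bd x)).2
      simp only []
      linarith
  have hGint : Integrable (fun x => a * F x + 3 * c / 2 * F x ^ 2 + -(γ / 2) * F x ^ 3) :=
    comboInt _ _ _
  have hR0 : (∫ x : ℝ, (a * F x + 3 * c / 2 * F x ^ 2 + -(γ / 2) * F x ^ 3)) = 0 := by
    have h1 : ∫ x in Ioi (0:ℝ), (a * F x + 3 * c / 2 * F x ^ 2 + -(γ / 2) * F x ^ 3)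
        = 0 - F' 0 :=
      integral_Ioi_of_hasDerivAt_of_tendsto' (fun x _ => hF'd x) hGint.integrableOn
        (hF'0 atTop h0t)
    have h2 : ∫ x in Iic (0:ℝ), (a * F x + 3 * c / 2 * F x ^ 2 + -(γ / 2) * F x ^ 3)
        = F' 0 - 0 :=
      integral_Iic_of_hasDerivAt_of_tendsto (hF'c.continuousAt.continuousWithinAt)
        (fun x _ => hF'd x) hGint.integrableOn (hF'0 atBot h0b)
    rw [← intervalIntegral.integral_Iic_add_Ioi (b := (0:ℝ)) hGint.integrableOn hGint.integrableOn, h1, h2]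
    ring
  have hR : a * I2 + 3 * c / 2 * I4 + -(γ / 2) * I6 = 0 := by
    rw [← comboVal]; exact hR0
  constructor
  · constructor
    · refine (memLp_two_iff_integrable_sq_norm huc.aestronglyMeasurable).2 ?_
      exact hFint.congr (Eventually.of_forall fun x => (hnu x).symm)
    · rw [hderiv]
      refine (memLp_two_iff_integrable_sq_norm hWc.aestronglyMeasurable).2 ?_
      exact (comboInt _ _ _).congr (Eventually.of_forall fun x => (hnW x).symm)
  · have hMom : Mom (uA c F) = -(c / 2 * I2 + (-(1/4)) * I4 + 0 * I6) := by
      simp only [Mom]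
      rw [integral_congr_ae (Eventually.of_forall him1), comboVal]
    have hN1 : N1 (uA c F) = -(0 * I2 + c / 2 * I4 + (-(1/4)) * I6) := by
      simp only [N1]
      rw [integral_congr_ae (Eventually.of_forall him2), comboVal]
    have hDI : (∫ x : ℝ, ‖deriv (uA c F) x‖ ^ 2)
        = (a + c ^ 2) / 4 * I2 + 0 * I4 + (1 - γ) / 16 * I6 := by
      rw [hderiv, integral_congr_ae (Eventually.of_forall hnW), comboVal]
    have hI6' : (∫ x : ℝ, ‖uA c F x‖ ^ 6) = I6 := by
      rw [integral_congr_ae (Eventually.of_forall hnu6)]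
    simp only [En]
    rw [hDI, hN1, hI6', hMom]
    linear_combination (1/8) * hR + I6 / 32 * hγ

end AuxSol

set_option maxHeartbeats 2000000 in
open MeasureTheory Real Complex Filter Topology Set in
/-- For `-2√ω < c ≤ 2√ω` the soliton lies in `H¹` and `E(φ_{ω,c}) = -(c/4) P(φ_{ω,c})`. -/
theorem soliton_energy_momentum_relation (b : ℝ) (hb : 0 ≤ b) (ω c : ℝ)
    (hω : 0 < ω) (hc1 : -2 * Real.sqrt ω < c) (hc2 : c ≤ 2 * Real.sqrt ω) :
    InH1 (phiSol b ω c)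
    ∧ En b (phiSol b ω c) = -(c / 4) * Mom (phiSol b ω c) := by
  have hsω : Real.sqrt ω ^ 2 = ω := Real.sq_sqrt hω.le
  have hc4 : c ^ 2 ≤ 4 * ω := by nlinarith [Real.sqrt_nonneg ω]
  set γ : ℝ := 1 + 16 * b / 3 with hγdef
  have hγ1 : (1:ℝ) ≤ γ := by rw [hγdef]; linarith
  have hγ0 : (0:ℝ) < γ := by linarith
  have hx2top : Tendsto (fun x : ℝ => x ^ 2) atTop atTop := tendsto_pow_atTop two_ne_zero
  have hx2bot : Tendsto (fun x : ℝ => x ^ 2) atBot atTop := by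
    have h1 := hx2top.comp tendsto_neg_atBot_atTop
    refine h1.congr fun x => ?_
    simp [Function.comp]
  by_cases hlt : 4 * ω > c ^ 2
  · -- non-degenerate case
    set a : ℝ := 4 * ω - c ^ 2 with hadef
    have ha : 0 < a := by rw [hadef]; linarith
    set s : ℝ := Real.sqrt a with hsdef
    set d : ℝ := Real.sqrt (c ^ 2 + γ * a) with hddef
    have hs2 : s ^ 2 = a := Real.sq_sqrt ha.le
    have hs0 : 0 < s := Real.sqrt_pos.2 ha
    have hd2 : d ^ 2 = c ^ 2 + γ * a := Real.sq_sqrt (by nlinarith)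
    have hcd : |c| < d := by
      rw [hddef, ← Real.sqrt_sq_eq_abs]
      exact Real.sqrt_lt_sqrt (sq_nonneg c) (by nlinarith)
    have hd0 : 0 < d := lt_of_le_of_lt (abs_nonneg c) hcd
    have hdc' : 0 < d - |c| := sub_pos.2 hcd
    set F : ℝ → ℝ := fun x => 2 * a / (d * Real.cosh (s * x) - c) with hF
    set F' : ℝ → ℝ := fun x => -(2 * a * d * s) * Real.sinh (s * x)
        / (d * Real.cosh (s * x) - c) ^ 2 with hF'def
    have hDge : ∀ x, (d - |c|) * Real.cosh (s * x) ≤ d * Real.cosh (s * x) - c := by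
      intro x
      have h1 := Real.one_le_cosh (s * x)
      have h2 : c ≤ |c| * Real.cosh (s * x) :=
        le_trans (le_abs_self c) (le_mul_of_one_le_right (abs_nonneg c) h1)
      nlinarith
    have hDpos : ∀ x, 0 < d * Real.cosh (s * x) - c := by
      intro x
      have h0 := Real.cosh_pos (x := s * x)
      have h1 : 0 < (d - |c|) * Real.cosh (s * x) := by positivity
      linarith [hDge x]
    have hFpos : ∀ x, 0 < F x := fun x => div_pos (by positivity) (hDpos x)
    have hDd : ∀ x, HasDerivAt (fun y => d * Real.cosh (s * y) - c)
        (d * s * Real.sinh (s * x)) x := by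
      intro x
      have h1 : HasDerivAt (fun y : ℝ => s * y) s x := by
        simpa using (hasDerivAt_id x).const_mul s
      have h2 : HasDerivAt (fun y : ℝ => Real.cosh (s * y)) (Real.sinh (s * x) * s) x :=
        (Real.hasDerivAt_cosh (s * x)).comp x h1
      have h3 := (h2.const_mul d).sub_const c
      refine h3.congr_deriv ?_
      ring
    have hFd : ∀ x, HasDerivAt F (F' x) x := by
      intro x
      have h1 := (hasDerivAt_const x (2 * a)).div (hDd x) (hDpos x).ne'
      refine h1.congr_deriv ?_
      simp only [hF'def]
      rw [div_eq_div_iff (pow_ne_zero 2 (hDpos x).ne') (pow_ne_zero 2 (hDpos x).ne')]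
      ring
    have hN : ∀ x, HasDerivAt (fun y => -(2 * a * d * s) * Real.sinh (s * y))
        (-(2 * a * d * s) * (Real.cosh (s * x) * s)) x := by
      intro x
      have h1 : HasDerivAt (fun y : ℝ => s * y) s x := by
        simpa using (hasDerivAt_id x).const_mul s
      exact ((Real.hasDerivAt_sinh (s * x)).comp x h1).const_mul _
    have hDen : ∀ x, HasDerivAt (fun y => (d * Real.cosh (s * y) - c) ^ 2)
        (2 * (d * Real.cosh (s * x) - c) * (d * s * Real.sinh (s * x))) x := by
      intro x
      have h1 := (hDd x).pow 2
      refine h1.congr_deriv ?_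
      push_cast
      ring
    have hF'd : ∀ x, HasDerivAt F'
        (a * F x + 3 * c / 2 * F x ^ 2 + -(γ / 2) * F x ^ 3) x := by
      intro x
      have h1 := (hN x).div (hDen x) (pow_ne_zero 2 (hDpos x).ne')
      have h2 : (-(2 * a * d * s) * (Real.cosh (s * x) * s) * (d * Real.cosh (s * x) - c) ^ 2
            - -(2 * a * d * s) * Real.sinh (s * x)
              * (2 * (d * Real.cosh (s * x) - c) * (d * s * Real.sinh (s * x))))
            / ((d * Real.cosh (s * x) - c) ^ 2) ^ 2
          = a * F x + 3 * c / 2 * F x ^ 2 + -(γ / 2) * F x ^ 3 := by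
        have hcore := core1 a c γ d s (Real.cosh (s * x)) (Real.sinh (s * x))
          (d * Real.cosh (s * x) - c) (by ring) (Real.sinh_sq (s * x)) hd2 hs2
        have e1 : (-(2 * a * d * s) * (Real.cosh (s * x) * s) * (d * Real.cosh (s * x) - c) ^ 2
              - -(2 * a * d * s) * Real.sinh (s * x)
                * (2 * (d * Real.cosh (s * x) - c) * (d * s * Real.sinh (s * x))))
              / ((d * Real.cosh (s * x) - c) ^ 2) ^ 2
            = (-2*a*d*s^2*(Real.cosh (s * x))*(d * Real.cosh (s * x) - c)
                + 4*a*d^2*s^2*(Real.sinh (s * x))^2) / (d * Real.cosh (s * x) - c) ^ 3 := by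
          rw [div_eq_div_iff (pow_ne_zero 2 (pow_ne_zero 2 (hDpos x).ne')) (pow_ne_zero 3 (hDpos x).ne')]
          ring
        have e2 : a * F x + 3 * c / 2 * F x ^ 2 + -(γ / 2) * F x ^ 3
            = (2*a^2*(d * Real.cosh (s * x) - c)^2 + 6*c*a^2*(d * Real.cosh (s * x) - c)
                - 4*γ*a^3) / (d * Real.cosh (s * x) - c) ^ 3 := by
          simp only [hF]
          field_simp [(hDpos x).ne']
          ring
        rw [e1, e2, hcore]
      exact h2 ▸ h1
    have hA : ∀ x, F' x ^ 2 = a * F x ^ 2 + c * F x ^ 3 - γ / 4 * F x ^ 4 := by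
      intro x
      have hcore := core2 a c γ d s (Real.cosh (s * x)) (Real.sinh (s * x))
        (d * Real.cosh (s * x) - c) (by ring) (Real.sinh_sq (s * x)) hd2 hs2
      have e1 : F' x ^ 2
          = (4*a^2*d^2*s^2*(Real.sinh (s * x))^2) / (d * Real.cosh (s * x) - c) ^ 4 := by
        simp only [hF'def, div_pow]
        rw [div_eq_div_iff (pow_ne_zero 2 (pow_ne_zero 2 (hDpos x).ne')) (pow_ne_zero 4 (hDpos x).ne')]
        ring
      have e2 : a * F x ^ 2 + c * F x ^ 3 - γ / 4 * F x ^ 4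
          = (4*a^3*(d * Real.cosh (s * x) - c)^2 + 8*c*a^3*(d * Real.cosh (s * x) - c)
              - 4*γ*a^4) / (d * Real.cosh (s * x) - c) ^ 4 := by
        simp only [hF]
        field_simp [(hDpos x).ne']
        ring
      rw [e1, e2, hcore]
    have hFc : Continuous F := by
      rw [continuous_iff_continuousAt]; exact fun x => (hFd x).continuousAt
    have hcoshq : ∀ t : ℝ, 1 + t ^ 2 / 2 ≤ Real.cosh t := cosh_quad
    set m : ℝ := min 1 (s ^ 2 / 2) with hmdef
    have hm0 : 0 < m := lt_min one_pos (by positivity)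
    have hDq : ∀ x, (d - |c|) * m * (1 + x ^ 2) ≤ d * Real.cosh (s * x) - c := by
      intro x
      have h1 := hcoshq (s * x)
      have h2 : m * (1 + x ^ 2) ≤ 1 + (s * x) ^ 2 / 2 := by
        have h3 : m ≤ 1 := min_le_left _ _
        have h4 : m ≤ s ^ 2 / 2 := min_le_right _ _
        have h5 : m * x ^ 2 ≤ s ^ 2 / 2 * x ^ 2 :=
          mul_le_mul_of_nonneg_right h4 (sq_nonneg x)
        nlinarith [sq_nonneg x, sq_nonneg (s * x)]
      have h6 : (d - |c|) * (m * (1 + x ^ 2)) ≤ (d - |c|) * Real.cosh (s * x) := by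
        apply mul_le_mul_of_nonneg_left _ hdc'.le
        linarith
      calc (d - |c|) * m * (1 + x ^ 2) = (d - |c|) * (m * (1 + x ^ 2)) := by ring
        _ ≤ (d - |c|) * Real.cosh (s * x) := h6
        _ ≤ d * Real.cosh (s * x) - c := hDge x
    have hFint : Integrable F := by
      refine (integrable_inv_one_add_sq.const_mul (2 * a / ((d - |c|) * m))).mono'
        hFc.aestronglyMeasurable ?_
      filter_upwards with x
      rw [Real.norm_eq_abs, _root_.abs_of_nonneg (hFpos x).le, ← div_eq_mul_inv, div_div]
      exact div_le_div_of_nonneg_left (by positivity) (by positivity) (hDq x)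
    have hDge1 : ∀ x, d - |c| ≤ d * Real.cosh (s * x) - c := by
      intro x
      have h1 : d - |c| ≤ (d - |c|) * Real.cosh (s * x) :=
        le_mul_of_one_le_right hdc'.le (Real.one_le_cosh (s * x))
      linarith [hDge x]
    have hFle : ∀ x, F x ≤ 2 * a / (d - |c|) := fun x =>
      div_le_div_of_nonneg_left (by positivity) hdc' (hDge1 x)
    have hDtop : Tendsto (fun x => d * Real.cosh (s * x) - c) atTop atTop := by
      refine tendsto_atTop_mono (fun x => hDq x) ?_
      exact (tendsto_atTop_add_const_left _ 1 hx2top).const_mul_atTop (by positivity)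
    have hDbot : Tendsto (fun x => d * Real.cosh (s * x) - c) atBot atTop := by
      refine tendsto_atTop_mono (fun x => hDq x) ?_
      exact (tendsto_atTop_add_const_left _ 1 hx2bot).const_mul_atTop (by positivity)
    have h0t : Tendsto F atTop (𝓝 0) := by
      simp only [hF]
      exact Tendsto.div_atTop tendsto_const_nhds hDtop
    have h0b : Tendsto F atBot (𝓝 0) := by
      simp only [hF]
      exact Tendsto.div_atTop tendsto_const_nhds hDbot
    have hkey := key b a c γ hb hγdef ha.le F F' hFpos hFd hF'd hA hFint
      (2 * a / (d - |c|)) (by positivity) hFle h0t h0b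
    have hsol : phiSol b ω c = uA c F := by
      funext x
      have hPhi : ∀ y : ℝ, PhiProf b ω c y = Real.sqrt (F y) := by
        intro y
        simp only [PhiProf, if_pos hlt]
        rfl
      simp only [phiSol, uA, hPhi]
    rw [hsol]
    exact hkey
  · -- degenerate case : c = 2 √ω > 0
    have hc2eq : c ^ 2 = 4 * ω := le_antisymm hc4 (not_lt.1 hlt)
    have hc0 : 0 < c := by
      rcases lt_trichotomy c 0 with h | h | h
      · exfalso
        nlinarith [mul_pos (show (0:ℝ) < c + 2 * Real.sqrt ω by linarith)
          (show (0:ℝ) < -c by linarith)]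
      · exfalso; rw [h] at hc2eq; nlinarith
      · exact h
    set F : ℝ → ℝ := fun x => 4 * c / (c ^ 2 * x ^ 2 + γ) with hF
    set F' : ℝ → ℝ := fun x => -(8 * c ^ 3) * x / (c ^ 2 * x ^ 2 + γ) ^ 2 with hF'def
    have hDpos : ∀ x : ℝ, 0 < c ^ 2 * x ^ 2 + γ := fun x => by positivity
    have hFpos : ∀ x, 0 < F x := fun x => div_pos (by positivity) (hDpos x)
    have hDd : ∀ x, HasDerivAt (fun y : ℝ => c ^ 2 * y ^ 2 + γ) (c ^ 2 * (2 * x)) x := by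
      intro x
      have h1 := ((hasDerivAt_pow 2 x).const_mul (c ^ 2)).add_const γ
      refine h1.congr_deriv ?_
      push_cast
      ring
    have hFd : ∀ x, HasDerivAt F (F' x) x := by
      intro x
      have h1 := (hasDerivAt_const x (4 * c)).div (hDd x) (hDpos x).ne'
      refine h1.congr_deriv ?_
      simp only [hF'def]
      rw [div_eq_div_iff (pow_ne_zero 2 (hDpos x).ne') (pow_ne_zero 2 (hDpos x).ne')]
      ring
    have hF'd : ∀ x, HasDerivAt F'
        (0 * F x + 3 * c / 2 * F x ^ 2 + -(γ / 2) * F x ^ 3) x := by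
      intro x
      have hN : HasDerivAt (fun y : ℝ => -(8 * c ^ 3) * y) (-(8 * c ^ 3)) x := by
        simpa using (hasDerivAt_id x).const_mul (-(8 * c ^ 3))
      have hDen : HasDerivAt (fun y : ℝ => (c ^ 2 * y ^ 2 + γ) ^ 2)
          (2 * (c ^ 2 * x ^ 2 + γ) * (c ^ 2 * (2 * x))) x := by
        have h1 := (hDd x).pow 2
        refine h1.congr_deriv ?_
        push_cast
        ring
      have h1 := hN.div hDen (pow_ne_zero 2 (hDpos x).ne')
      refine h1.congr_deriv ?_
      simp only [hF]
      field_simp [(hDpos x).ne']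
      ring
    have hA : ∀ x, F' x ^ 2 = 0 * F x ^ 2 + c * F x ^ 3 - γ / 4 * F x ^ 4 := by
      intro x
      simp only [hF, hF'def]
      rw [div_pow]
      field_simp [(hDpos x).ne']
      ring
    have hFc : Continuous F := by
      rw [continuous_iff_continuousAt]; exact fun x => (hFd x).continuousAt
    have hm0 : (0:ℝ) < min (c ^ 2) γ := lt_min (by positivity) hγ0
    have hDq : ∀ x : ℝ, min (c ^ 2) γ * (1 + x ^ 2) ≤ c ^ 2 * x ^ 2 + γ := by
      intro x
      have h1 : min (c ^ 2) γ * x ^ 2 ≤ c ^ 2 * x ^ 2 :=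
        mul_le_mul_of_nonneg_right (min_le_left _ _) (sq_nonneg x)
      have h2 : min (c ^ 2) γ ≤ γ := min_le_right _ _
      nlinarith
    have hFint : Integrable F := by
      refine (integrable_inv_one_add_sq.const_mul (4 * c / min (c ^ 2) γ)).mono'
        hFc.aestronglyMeasurable ?_
      filter_upwards with x
      rw [Real.norm_eq_abs, _root_.abs_of_nonneg (hFpos x).le, ← div_eq_mul_inv, div_div]
      exact div_le_div_of_nonneg_left (by positivity) (by positivity) (hDq x)
    have hFle : ∀ x, F x ≤ 4 * c / γ := by
      intro x
      refine div_le_div_of_nonneg_left (by positivity) hγ0 ?_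
      nlinarith [sq_nonneg (c * x)]
    have hDtop : Tendsto (fun x : ℝ => c ^ 2 * x ^ 2 + γ) atTop atTop := by
      refine tendsto_atTop_mono (fun x => hDq x) ?_
      exact (tendsto_atTop_add_const_left _ 1 hx2top).const_mul_atTop (by positivity)
    have hDbot : Tendsto (fun x : ℝ => c ^ 2 * x ^ 2 + γ) atBot atTop := by
      refine tendsto_atTop_mono (fun x => hDq x) ?_
      exact (tendsto_atTop_add_const_left _ 1 hx2bot).const_mul_atTop (by positivity)
    have h0t : Tendsto F atTop (𝓝 0) := by
      simp only [hF]
      exact Tendsto.div_atTop tendsto_const_nhds hDtop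
    have h0b : Tendsto F atBot (𝓝 0) := by
      simp only [hF]
      exact Tendsto.div_atTop tendsto_const_nhds hDbot
    have hkey := key b 0 c γ hb hγdef le_rfl F F' hFpos hFd hF'd hA hFint
      (4 * c / γ) (by positivity) hFle h0t h0b
    have hsol : phiSol b ω c = uA c F := by
      funext x
      have hPhi : ∀ y : ℝ, PhiProf b ω c y = Real.sqrt (F y) := by
        intro y
        simp only [PhiProf, if_neg hlt]
        rfl
      simp only [phiSol, uA, hPhi]
    rw [hsol]
    exact hkey
end

section
/- (Gauge equivalence of Chen–Lee–Liu and DNLS.) Let u : ℝ × ℝ → ℂ be smooth, suppose that for each t ∈ ℝ the function x ↦ u(t,x) is a Schwartz function, that for every compact interval I ⊂ ℝ one has sup_{t ∈ I, x ∈ ℝ} (1+x²)( |u(t,x)|² + |∂_t(|u(t,x)|²)| ) < ∞, and suppose u satisfies i∂_t u + ∂_{xx} u + i|u|² ∂_x u = 0 on ℝ × ℝ. Define ψ(t,x) = u(t,x) · exp( −(i/2) ∫_{−∞}^{x} |u(t,y)|² dy ). Then ψ satisfies i∂_t ψ + ∂_{xx} ψ + i ∂_x( |ψ|² ψ ) =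 0 on ℝ × ℝ. -/
open MeasureTheory Filter Complex

lemma hasDerivAt_integral_Iic {f : ℝ → ℝ} (hc : Continuous f) (hi : Integrable f) (x : ℝ) :
    HasDerivAt (fun y => ∫ z in Set.Iic y, f z) (f x) x := by
  have h : (fun y => ∫ z in Set.Iic y, f z)
      = fun y => (∫ z in Set.Iic (0:ℝ), f z) + ∫ z in (0:ℝ)..y, f z := by
    funext y
    rw [← intervalIntegral.integral_Iic_sub_Iic hi.integrableOn hi.integrableOn]
    ring
  rw [h]
  exact (intervalIntegral.integral_hasDerivAt_right hi.intervalIntegrable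
    (hc.stronglyMeasurableAtFilter _ _) hc.continuousAt).const_add _

lemma schwartz_tendsto_atBot (f : SchwartzMap ℝ ℂ) : Tendsto f atBot (nhds 0) :=
  (zero_at_infty f).mono_left atBot_le_cocompact

lemma normsq_eq (z : ℂ) : ‖z‖ ^ 2 = z.re ^ 2 + z.im ^ 2 := by
  rw [Complex.sq_norm, Complex.normSq_apply]; ring

/-- Gauge equivalence of the Chen–Lee–Liu equation and DNLS: if `u` is a smooth
solution of `i∂ₜu + ∂ₓₓu + i|u|²∂ₓu = 0`, Schwartz in `x` for each `t`, with the
stated locally-in-time uniform decay, then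
`ψ(t,x) = u(t,x) exp(−(i/2)∫_{−∞}^x |u(t,y)|² dy)` solves
`i∂ₜψ + ∂ₓₓψ + i∂ₓ(|ψ|²ψ) = 0`. -/
theorem gauge_equivalence_CLL_DNLS (u : ℝ → ℝ → ℂ)
    (hsmooth : ContDiff ℝ (⊤ : ℕ∞) (fun p : ℝ × ℝ => u p.1 p.2))
    (hschwartz : ∀ t : ℝ, ∃ f : SchwartzMap ℝ ℂ, ∀ x : ℝ, f x = u t x)
    (hbound : ∀ a b : ℝ, ∃ C : ℝ, ∀ t ∈ Set.Icc a b, ∀ x : ℝ,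
      (1 + x ^ 2) * (‖u t x‖ ^ 2 + |deriv (fun s => ‖u s x‖ ^ 2) t|) ≤ C)
    (hPDE : ∀ t x : ℝ, Complex.I * deriv (fun s => u s x) t
      + deriv (deriv (u t)) x + Complex.I * (‖u t x‖ : ℂ) ^ 2 * deriv (u t) x = 0)
    (ψ : ℝ → ℝ → ℂ)
    (hψ : ∀ t x : ℝ, ψ t x = u t x * Complex.exp (-(Complex.I / 2) *
      ((∫ y in Set.Iic x, ‖u t y‖ ^ 2 : ℝ) : ℂ))) :
    ∀ t x : ℝ, Complex.I * deriv (fun s => ψ s x) t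
      + deriv (deriv (ψ t)) x
      + Complex.I * deriv (fun y => (‖ψ t y‖ : ℂ) ^ 2 * ψ t y) x = 0 := by
  intro t x
  obtain ⟨f, hf⟩ := hschwartz t
  have hfu : ⇑f = u t := funext hf
  set f₁ : SchwartzMap ℝ ℂ := SchwartzMap.derivCLM ℝ ℂ f with hf₁def
  set f₂ : SchwartzMap ℝ ℂ := SchwartzMap.derivCLM ℝ ℂ f₁ with hf₂def
  have hf₁ : ⇑f₁ = deriv (u t) := by
    funext y; rw [← hfu]; exact SchwartzMap.derivCLM_apply ℝ f y
  have hf₂ : ⇑f₂ = deriv (deriv (u t)) := by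
    funext y; rw [← hf₁]; exact SchwartzMap.derivCLM_apply ℝ f₁ y
  -- basic derivative facts for f
  have hdf : ∀ y, HasDerivAt f (f₁ y) y := by
    intro y
    have := (((f.smooth ⊤).differentiable (by simp)) y).hasDerivAt
    rwa [show deriv f y = f₁ y from (SchwartzMap.derivCLM_apply ℝ f y).symm] at this
  have hdf₁ : ∀ y, HasDerivAt f₁ (f₂ y) y := by
    intro y
    have := (((f₁.smooth ⊤).differentiable (by simp)) y).hasDerivAt
    rwa [show deriv f₁ y = f₂ y from (SchwartzMap.derivCLM_apply ℝ f₁ y).symm] at this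
  have hre : ∀ y, HasDerivAt (fun z => (f z).re) ((f₁ y).re) y := fun y => by
    simpa [Function.comp_def] using (Complex.reCLM.hasFDerivAt.comp_hasDerivAt y (hdf y))
  have him : ∀ y, HasDerivAt (fun z => (f z).im) ((f₁ y).im) y := fun y => by
    simpa [Function.comp_def] using (Complex.imCLM.hasFDerivAt.comp_hasDerivAt y (hdf y))
  -- the local density n and its x-derivative m
  set n : ℝ → ℝ := fun y => ‖f y‖ ^ 2 with hndef
  have hn_eq : ∀ y, n y = (f y).re ^ 2 + (f y).im ^ 2 := fun y => normsq_eq (f y)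
  set m : ℝ → ℝ := fun y => 2 * ((f y).re * (f₁ y).re + (f y).im * (f₁ y).im) with hmdef
  have hn : ∀ y, HasDerivAt n (m y) y := by
    intro y
    have h0 : HasDerivAt (fun z => (f z).re ^ 2 + (f z).im ^ 2)
        ((2:ℕ) * (f y).re ^ 1 * (f₁ y).re + (2:ℕ) * (f y).im ^ 1 * (f₁ y).im) y :=
      ((hre y).pow 2).add ((him y).pow 2)
    have hfn : n = fun z => (f z).re ^ 2 + (f z).im ^ 2 := funext hn_eq
    rw [hfn]
    convert h0 using 1
    push_cast
    ring
  have hncont : Continuous n := by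
    rw [funext hn_eq]; fun_prop
  -- bounds
  obtain ⟨C, hC⟩ := hbound (t - 1) (t + 1)
  have htmem : t ∈ Set.Icc (t-1) (t+1) := by constructor <;> linarith
  have hCn : ∀ y, n y ≤ C * (1 + y ^ 2)⁻¹ := by
    intro y
    have h := hC t htmem y
    have h1 : (0:ℝ) < 1 + y ^ 2 := by positivity
    have h2 : n y = ‖u t y‖ ^ 2 := by rw [hndef]; simp only [hfu]
    rw [h2, ← div_eq_mul_inv, le_div_iff₀ h1]
    nlinarith [abs_nonneg (deriv (fun s => ‖u s y‖ ^ 2) t)]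
  set D : ℝ → ℝ → ℝ := fun s y => deriv (fun r => ‖u r y‖ ^ 2) s with hDdef
  have hCD : ∀ s ∈ Metric.ball t 1, ∀ y : ℝ, |D s y| ≤ C * (1 + y ^ 2)⁻¹ := by
    intro s hs y
    have hsmem : s ∈ Set.Icc (t-1) (t+1) := by
      rw [Metric.mem_ball, Real.dist_eq] at hs
      have := abs_lt.mp hs
      constructor <;> linarith [this.1, this.2]
    have h := hC s hsmem y
    have h1 : (0:ℝ) < 1 + y ^ 2 := by positivity
    rw [← div_eq_mul_inv, le_div_iff₀ h1]
    nlinarith [sq_nonneg (‖u s y‖)]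
  have hInt_n : Integrable n := by
    refine (integrable_inv_one_add_sq.const_mul C).mono' hncont.aestronglyMeasurable
      (ae_of_all _ fun y => ?_)
    rw [Real.norm_eq_abs, _root_.abs_of_nonneg (by rw [hndef]; positivity)]
    exact hCn y
  -- the phase function and gauge factor
  set Φ : ℝ → ℝ := fun y => ∫ z in Set.Iic y, ‖u t z‖ ^ 2 with hΦdef
  have hΦn : Φ = fun y => ∫ z in Set.Iic y, n z := by
    funext y; rw [hΦdef, hndef]; simp only [hfu]
  have hΦ : ∀ y, HasDerivAt Φ (n y) y := by
    intro y; rw [hΦn]; exact hasDerivAt_integral_Iic hncont hInt_n y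
  set E : ℝ → ℂ := fun y => Complex.exp (-(Complex.I/2) * (Φ y : ℂ)) with hEdef
  have hE : ∀ y, HasDerivAt E (E y * (-(Complex.I/2) * (n y : ℂ))) y := by
    intro y
    exact (((hΦ y).ofReal_comp).const_mul (-(Complex.I/2))).cexp
  have hψt_eq : ψ t = fun y => f y * E y := by
    funext y; rw [hψ t y, hf y]
  -- first x-derivative of ψ t
  have hψx : ∀ y, HasDerivAt (ψ t)
      ((f₁ y - Complex.I/2 * (n y : ℂ) * f y) * E y) y := by
    intro y
    rw [hψt_eq]
    have h0 := (hdf y).mul (hE y)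
    refine h0.congr_deriv ?_
    ring
  have hdψ : deriv (ψ t) = fun y => (f₁ y - Complex.I/2 * (n y : ℂ) * f y) * E y :=
    funext fun y => (hψx y).deriv
  -- second x-derivative of ψ t at x
  have hψxx : HasDerivAt (deriv (ψ t))
      ((f₂ x - (Complex.I/2 * (m x : ℂ) * f x + Complex.I/2 * (n x : ℂ) * f₁ x)) * E x
        + (f₁ x - Complex.I/2 * (n x : ℂ) * f x) * (E x * (-(Complex.I/2) * (n x : ℂ)))) x := by
    rw [hdψ]
    have h1 : HasDerivAt (fun y => Complex.I/2 * (n y : ℂ) * f y)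
        (Complex.I/2 * (m x : ℂ) * f x + Complex.I/2 * (n x : ℂ) * f₁ x) x := by
      have h2 := (((hn x).ofReal_comp).const_mul (Complex.I/2)).mul (hdf x)
      exact h2.congr_deriv (by ring)
    exact ((hdf₁ x).sub h1).mul (hE x)
  -- the cubic term
  have hcube : (fun y => (‖ψ t y‖ : ℂ) ^ 2 * ψ t y) = fun y => ((n y : ℝ) : ℂ) * (f y * E y) := by
    funext y
    rw [hψt_eq]
    have hEnorm : ‖f y * E y‖ = ‖f y‖ := by
      rw [norm_mul, hEdef]
      simp [Complex.norm_exp]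
    rw [hEnorm, hndef]
    push_cast
    ring
  have hcubed : HasDerivAt (fun y => (‖ψ t y‖ : ℂ) ^ 2 * ψ t y)
      ((m x : ℂ) * (f x * E x)
        + (n x : ℂ) * (f₁ x * E x + f x * (E x * (-(Complex.I/2) * (n x : ℂ))))) x := by
    rw [hcube]
    exact ((hn x).ofReal_comp).mul ((hdf x).mul (hE x))
  -- time derivative of u via the PDE
  have hUdiff : ∀ s y : ℝ, DifferentiableAt ℝ (fun r => u r y) s := by
    intro s y
    have h0 : (fun r => u r y) = (fun p : ℝ × ℝ => u p.1 p.2) ∘ (fun r => (r, y)) := rfl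
    rw [h0]
    exact ((hsmooth.differentiable (by simp)).comp
      (differentiable_id.prodMk (differentiable_const y))).differentiableAt
  have hUt : ∀ y, deriv (fun s => u s y) t = Complex.I * f₂ y - ((n y : ℝ) : ℂ) * f₁ y := by
    intro y
    have h := hPDE t y
    rw [← hf₂, ← hf₁, ← hfu] at h
    have h2 : ((n y : ℝ) : ℂ) = (‖f y‖ : ℂ) ^ 2 := by rw [hndef]; push_cast; ring
    rw [h2]
    linear_combination (-Complex.I) * h + (deriv (fun s => u s y) t + (‖f y‖:ℂ)^2 * f₁ y) * Complex.I_sq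
  -- time derivative of the density exists
  have hnt : ∀ s y : ℝ, HasDerivAt (fun r => ‖u r y‖ ^ 2) (D s y) s := by
    intro s y
    have hd : DifferentiableAt ℝ (fun r => ‖u r y‖ ^ 2) s := by
      have h0 : (fun r => ‖u r y‖ ^ 2) = fun r => (u r y).re ^ 2 + (u r y).im ^ 2 :=
        funext fun r => normsq_eq _
      rw [h0]
      have hdu := hUdiff s y
      exact ((Complex.reCLM.differentiable.differentiableAt.comp s hdu).pow 2).add
        ((Complex.imCLM.differentiable.differentiableAt.comp s hdu).pow 2)
    exact hd.hasDerivAt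
  -- conservation-law form of the time derivative
  set w : ℝ → ℂ := fun y => Complex.I * f₂ y - ((n y : ℝ) : ℂ) * f₁ y with hwdef
  set G' : ℝ → ℝ := fun y => 2 * ((f y).re * (w y).re + (f y).im * (w y).im) with hG'def
  have hD_eq : ∀ y, D t y = G' y := by
    intro y
    have hdu : HasDerivAt (fun r => u r y) (deriv (fun r => u r y) t) t :=
      (hUdiff t y).hasDerivAt
    have hr : HasDerivAt (fun r => (u r y).re) ((deriv (fun r => u r y) t).re) t := by
      simpa [Function.comp_def] using (Complex.reCLM.hasFDerivAt.comp_hasDerivAt t hdu)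
    have hi : HasDerivAt (fun r => (u r y).im) ((deriv (fun r => u r y) t).im) t := by
      simpa [Function.comp_def] using (Complex.imCLM.hasFDerivAt.comp_hasDerivAt t hdu)
    have h0 : HasDerivAt (fun r => ‖u r y‖ ^ 2)
        (2 * ((u t y).re * (deriv (fun r => u r y) t).re
          + (u t y).im * (deriv (fun r => u r y) t).im)) t := by
      have h1 : (fun r => ‖u r y‖ ^ 2) = fun r => (u r y).re ^ 2 + (u r y).im ^ 2 :=
        funext fun r => normsq_eq _
      rw [h1]
      have h3 := ((hr.pow 2).add (hi.pow 2))
      refine h3.congr_deriv ?_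
      push_cast
      ring
    have h2 : D t y = 2 * ((u t y).re * (deriv (fun r => u r y) t).re
          + (u t y).im * (deriv (fun r => u r y) t).im) := h0.deriv
    rw [h2, hUt y, ← hf y]
  -- continuity of G'
  have hG'cont : Continuous G' := by
    rw [hG'def, hwdef]
    have hnc : Continuous (fun y => ((n y : ℝ) : ℂ)) := Complex.continuous_ofReal.comp hncont
    fun_prop
  -- antiderivative G of G'
  set G : ℝ → ℝ := fun y =>
    -2 * ((f y).re * (f₁ y).im - (f y).im * (f₁ y).re)
      - ((f y).re ^ 2 + (f y).im ^ 2) ^ 2 / 2 with hGdef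
  have hGd : ∀ y, HasDerivAt G (G' y) y := by
    intro y
    have hre₁ : HasDerivAt (fun z => (f₁ z).re) ((f₂ y).re) y := by
      simpa [Function.comp_def] using (Complex.reCLM.hasFDerivAt.comp_hasDerivAt y (hdf₁ y))
    have him₁ : HasDerivAt (fun z => (f₁ z).im) ((f₂ y).im) y := by
      simpa [Function.comp_def] using (Complex.imCLM.hasFDerivAt.comp_hasDerivAt y (hdf₁ y))
    have h0 : HasDerivAt G
        (-2 * (((f₁ y).re * (f₁ y).im + (f y).re * (f₂ y).im)
            - ((f₁ y).im * (f₁ y).re + (f y).im * (f₂ y).re))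
          - (2:ℕ) * ((f y).re ^ 2 + (f y).im ^ 2) ^ 1
              * ((2:ℕ) * (f y).re ^ 1 * (f₁ y).re + (2:ℕ) * (f y).im ^ 1 * (f₁ y).im) / 2) y := by
      rw [hGdef]
      exact ((((hre y).mul (him₁)).sub ((him y).mul (hre₁))).const_mul (-2)).sub
        (((((hre y).pow 2).add ((him y).pow 2)).pow 2).div_const 2)
    convert h0 using 1
    simp only [hG'def, hwdef, Complex.sub_re, Complex.sub_im, Complex.mul_re, Complex.mul_im,
      Complex.I_re, Complex.I_im, Complex.ofReal_re, Complex.ofReal_im, hn_eq y]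
    push_cast
    ring
  -- integrability of G' on Iic x
  have hG'int : IntegrableOn G' (Set.Iic x) := by
    refine ((integrable_inv_one_add_sq.const_mul C).mono' hG'cont.aestronglyMeasurable
      (ae_of_all _ fun y => ?_)).integrableOn
    rw [Real.norm_eq_abs, ← hD_eq y]
    exact hCD t (Metric.mem_ball_self one_pos) y
  -- G tends to 0 at -∞
  have hGbot : Tendsto G atBot (nhds 0) := by
    have hfre : Tendsto (fun y => (f y).re) atBot (nhds 0) := by
      have h1 := (Complex.continuous_re.tendsto (0:ℂ)).comp (schwartz_tendsto_atBot f)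
      simpa [Function.comp_def] using h1
    have hfim : Tendsto (fun y => (f y).im) atBot (nhds 0) := by
      have h1 := (Complex.continuous_im.tendsto (0:ℂ)).comp (schwartz_tendsto_atBot f)
      simpa [Function.comp_def] using h1
    have hf1re : Tendsto (fun y => (f₁ y).re) atBot (nhds 0) := by
      have h1 := (Complex.continuous_re.tendsto (0:ℂ)).comp (schwartz_tendsto_atBot f₁)
      simpa [Function.comp_def] using h1
    have hf1im : Tendsto (fun y => (f₁ y).im) atBot (nhds 0) := by
      have h1 := (Complex.continuous_im.tendsto (0:ℂ)).comp (schwartz_tendsto_atBot f₁)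
      simpa [Function.comp_def] using h1
    have hbig := (((hfre.mul hf1im).sub (hfim.mul hf1re)).const_mul (-2)).sub
      ((((hfre.pow 2).add (hfim.pow 2)).pow 2).div_const 2)
    rw [hGdef]
    simpa using hbig
  -- the integral of D t over Iic x
  have hGint_eq : (∫ y in Set.Iic x, D t y) = G x := by
    have h0 := integral_Iic_of_hasDerivAt_of_tendsto' (fun y _ => hGd y) hG'int hGbot
    rw [sub_zero] at h0
    calc (∫ y in Set.Iic x, D t y) = ∫ y in Set.Iic x, G' y := by
          simp only [hD_eq]
      _ = G x := h0
  -- differentiate under the integral sign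
  have hφt : HasDerivAt (fun s => ∫ y in Set.Iic x, ‖u s y‖ ^ 2) (G x) t := by
    have hmain := hasDerivAt_integral_of_dominated_loc_of_deriv_le
      (F := fun s y => ‖u s y‖ ^ 2) (F' := D) (x₀ := t)
      (bound := fun y => C * (1 + y ^ 2)⁻¹) (μ := volume.restrict (Set.Iic x))
      (Metric.ball_mem_nhds t one_pos)
      (Eventually.of_forall fun s => by
        have : Continuous fun y => ‖u s y‖ ^ 2 := by
          have hc : Continuous fun y => u s y :=
            hsmooth.continuous.comp (continuous_const.prodMk continuous_id)
          fun_prop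
        exact this.aestronglyMeasurable)
      (show Integrable (fun y => ‖u t y‖ ^ 2) (volume.restrict (Set.Iic x)) by
        rw [show (fun y => ‖u t y‖ ^ 2) = n by rw [hndef]; simp only [hfu]]
        exact hInt_n.integrableOn)
      (by
        have h1 : D t = G' := funext hD_eq
        rw [h1]
        exact hG'cont.aestronglyMeasurable)
      (ae_of_all _ fun y s hs => hCD s hs y)
      ((integrable_inv_one_add_sq.const_mul C).integrableOn)
      (ae_of_all _ fun y s _ => hnt s y)
    have h := hmain.2
    rwa [hGint_eq] at h
  -- time derivative of ψ at (t, x)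
  have hψtd : HasDerivAt (fun s => ψ s x)
      ((Complex.I * f₂ x - ((n x : ℝ) : ℂ) * f₁ x) * E x
        + f x * (E x * (-(Complex.I/2) * ((G x : ℝ) : ℂ)))) t := by
    have heq : (fun s => ψ s x) = fun s => u s x * Complex.exp (-(Complex.I/2) *
        ((∫ y in Set.Iic x, ‖u s y‖ ^ 2 : ℝ) : ℂ)) := by
      funext s; exact hψ s x
    rw [heq]
    have h1 : HasDerivAt (fun s => u s x) (deriv (fun s => u s x) t) t :=
      (hUdiff t x).hasDerivAt
    have h2 : HasDerivAt (fun s => Complex.exp (-(Complex.I/2) *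
        ((∫ y in Set.Iic x, ‖u s y‖ ^ 2 : ℝ) : ℂ)))
        (E x * (-(Complex.I/2) * ((G x : ℝ) : ℂ))) t := by
      have h3 := ((hφt.ofReal_comp).const_mul (-(Complex.I/2))).cexp
      convert h3 using 2
    have h4 := h1.mul h2
    rw [hUt x] at h4
    refine h4.congr_deriv ?_
    rw [hf x]
  -- assemble
  rw [hψtd.deriv, hψxx.deriv, hcubed.deriv]
  set a : ℝ := (f x).re with hadef
  set b : ℝ := (f x).im with hbdef
  set c : ℝ := (f₁ x).re with hcdef
  set d : ℝ := (f₁ x).im with hddef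
  set e : ℝ := (f₂ x).re with hedef
  set g : ℝ := (f₂ x).im with hgdef
  have hA : f x = (a : ℂ) + (b : ℂ) * Complex.I := (Complex.re_add_im _).symm
  have hB : f₁ x = (c : ℂ) + (d : ℂ) * Complex.I := (Complex.re_add_im _).symm
  have hCc : f₂ x = (e : ℂ) + (g : ℂ) * Complex.I := (Complex.re_add_im _).symm
  have hGx : G x = -2 * (a * d - b * c) - (a ^ 2 + b ^ 2) ^ 2 / 2 := rfl
  have hnx : n x = a ^ 2 + b ^ 2 := hn_eq x
  have hmx : m x = 2 * (a * c + b * d) := rfl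
  rw [hA, hB, hCc, hGx, hnx, hmx]
  push_cast
  linear_combination (E x * ((e:ℂ) + ((g:ℂ) - (b:ℂ)^2*(c:ℂ) + (a:ℂ)*(b:ℂ)*(d:ℂ)) * Complex.I)) *
    Complex.I_sq
end
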